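/- Let H be a complex Hilbert space and let A be a bounded self-adjoint operator on H; for s ∈ ℝ write cos(sA) := (exp(isA) + exp(-isA))/2, where exp denotes the exponential in the Banach algebra of bounded operators on H. Let ψ : ℝ → ℂ be a Schwartz function with ∫_ℝ ψ(σ) dσ = 1 and ∫_ℝ σ^k ψ(σ) dσ = 0 for every integer k ≥ 1, let c > 0, let φ : ℝ → ℂ be a bounded continuous function with support contained in [−2c, 2c] and with φ(s) = 1 for all s ∈ (−c, c), and for ε ∈ (0,1] define the bounded operator T_ε := ∫_ℝ φ(s) ε^{-1} ψ(s/ε) cos(sA) ds (Bochner integral). Then for every u ∈ H and every natural number m, ‖T_ε u − u‖ = O(ε^m) as ε → 0. -/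

import Mathlib

/-!
After the substitution `s = ε σ`, `T_ε = ∫ ψ(σ) g(ε σ) dσ` with `g(s) = φ(s) cos(s A)`.
Let `P` be the Taylor polynomial of degree `m` of `s ↦ cos(s A)` at `0`. Then
`‖g(s) - P(s)‖ ≤ K |s|^m` on all of `ℝ`: near `0` because `φ = 1` there and `s ↦ exp(± i s A)`
is analytic, at infinity because `g` vanishes and `P` has degree `m`, and in between by
compactness. As `ψ` has unit mass and vanishing higher moments, `∫ ψ(σ) P(ε σ) dσ = P(0) = 1`,
so `‖T_ε - 1‖ ≤ K ε^m ∫ |σ|^m |ψ(σ)| dσ`.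
-/

open MeasureTheory Filter Topology Asymptotics

/-- The operator cosine family `cos (s A) = (exp (i s A) + exp (-i s A)) / 2` of a bounded
operator `A` on a complex Hilbert space. -/
noncomputable def opCos {H : Type*} [NormedAddCommGroup H] [InnerProductSpace ℂ H]
    [CompleteSpace H] (A : H →L[ℂ] H) (s : ℝ) : H →L[ℂ] H :=
  (2 : ℂ)⁻¹ • (NormedSpace.exp (((s : ℂ) * Complex.I) • A) +
    NormedSpace.exp ((-(s : ℂ) * Complex.I) • A))

/-- The regularization operator `T_ε = ∫ φ(s) ε⁻¹ ψ(s/ε) cos (s A) ds`. -/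
noncomputable def regOp {H : Type*} [NormedAddCommGroup H] [InnerProductSpace ℂ H]
    [CompleteSpace H] (A : H →L[ℂ] H) (φ : ℝ → ℂ) (ψ : ℝ → ℂ) (ε : ℝ) : H →L[ℂ] H :=
  ∫ s : ℝ, (φ s * (ε : ℂ)⁻¹ * ψ (s / ε)) • opCos A s

theorem Asymptotics.IsBigO.top_of_nhds_of_cocompact {X E F : Type*} [TopologicalSpace X]
    [SeminormedAddCommGroup E] [NormedAddCommGroup F] {f : X → E} {g : X → F} {x₀ : X}
    (hf : Continuous f) (hg : Continuous g) (hg₀ : ∀ x ≠ x₀, g x ≠ 0)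
    (h₀ : f =O[𝓝 x₀] g) (hcocompact : f =O[cocompact X] g) : f =O[⊤] g := by
  obtain ⟨C₀, hC₀⟩ := h₀.bound
  obtain ⟨C₁, hC₁⟩ := hcocompact.bound
  obtain ⟨K, hK, hKC₁⟩ := mem_cocompact.1 hC₁
  set U := interior {x | ‖f x‖ ≤ C₀ * ‖g x‖}
  have hUC₀ : U ⊆ {x | ‖f x‖ ≤ C₀ * ‖g x‖} := interior_subset
  have hx₀ : x₀ ∈ U := mem_interior_iff_mem_nhds.2 hC₀
  have hKU : IsCompact (K \ U) := hK.diff isOpen_interior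
  have hU : f =O[𝓟 U] g := isBigO_principal.2 ⟨C₀, fun x hx => hUC₀ hx⟩
  have hKc : f =O[𝓟 Kᶜ] g := isBigO_principal.2 ⟨C₁, fun x hx => hKC₁ hx⟩
  -- on the compact set `K \ U`, which avoids `x₀`, `f` is bounded and `‖g‖` is bounded below
  have hKU : f =O[𝓟 (K \ U)] g :=
    (hf.continuousOn.isBigO_principal hKU (c := (1 : ℝ)) (by simp)).trans
      (hg.continuousOn.isBigO_rev_principal hKU
        (fun x hx => hg₀ x (by rintro rfl; exact hx.2 hx₀)) (1 : ℝ))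
  refine ((hU.sup hKc).sup hKU).mono ?_
  rw [sup_principal, sup_principal, ← principal_univ, principal_mono]
  intro x _
  by_cases hxU : x ∈ U <;> by_cases hxK : x ∈ K <;> simp [*]

theorem isBigO_cocompact_sum_pow_smul {E : Type*} [SeminormedAddCommGroup E] [NormedSpace ℂ E]
    (v : ℕ → E) (m : ℕ) :
    (fun s : ℝ => ∑ n ∈ Finset.range (m + 1), (s : ℂ) ^ n • v n) =O[cocompact ℝ]
      fun s : ℝ => s ^ m := by
  refine IsBigO.fun_sum fun n hn => IsBigO.of_bound ‖v n‖ ?_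
  filter_upwards [(isCompact_closedBall (0 : ℝ) 1).compl_mem_cocompact] with s hs
  have hs : 1 ≤ |s| := (by simpa using hs : 1 < |s|).le
  rw [norm_smul, norm_pow, Complex.norm_real, Real.norm_eq_abs, norm_pow, Real.norm_eq_abs,
    mul_comm]
  exact mul_le_mul_of_nonneg_left
    (pow_le_pow_right₀ hs (Nat.lt_succ_iff.1 (Finset.mem_range.1 hn))) (norm_nonneg _)

theorem NormedSpace.isBigO_exp_smul_sub_sum {𝔸 : Type*} [NormedRing 𝔸] [NormedAlgebra ℂ 𝔸]
    [CompleteSpace 𝔸] (B : 𝔸) (N : ℕ) :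
    (fun s : ℝ => exp ((s : ℂ) • B) -
      ∑ n ∈ Finset.range N, (s : ℂ) ^ n • ((n.factorial : ℂ)⁻¹ • B ^ n)) =O[𝓝 0]
      fun s : ℝ => s ^ N := by
  have hTaylor := (exp_hasFPowerSeriesAt_zero (𝕂 := ℂ) (𝔸 := 𝔸)).isBigO_sub_partialSum_pow N
  have hlin : Tendsto (fun s : ℝ => (s : ℂ) • B) (𝓝 0) (𝓝 0) := by
    have : Continuous fun s : ℝ => (s : ℂ) • B := by fun_prop
    simpa using this.tendsto 0
  refine ((hTaylor.comp_tendsto hlin).congr_left fun s => ?_).trans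
    (IsBigO.of_bound (‖B‖ ^ N) (Eventually.of_forall fun s => ?_))
  · simp only [zero_add, FormalMultilinearSeries.partialSum, expSeries_apply_eq, Function.comp]
    congr 1
    exact Finset.sum_congr rfl fun n _ => by rw [smul_pow, smul_comm]
  · simp [norm_smul, mul_pow, mul_comm]

theorem isBigO_top_smul_sub_sum_of_isBigO_nhds {E : Type*} [NormedAddCommGroup E]
    [NormedSpace ℂ E] {φ : ℝ → ℂ} {F : ℝ → E} (hφ : Continuous φ) (hφc : HasCompactSupport φ)
    (hφ1 : φ =ᶠ[𝓝 0] 1) (hF : Continuous F) (v : ℕ → E) (m : ℕ)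
    (hFv : (fun s : ℝ => F s - ∑ n ∈ Finset.range (m + 1), (s : ℂ) ^ n • v n) =O[𝓝 0]
      fun s : ℝ => s ^ m) :
    (fun s : ℝ => φ s • F s - ∑ n ∈ Finset.range (m + 1), (s : ℂ) ^ n • v n) =O[⊤]
      fun s : ℝ => s ^ m := by
  refine IsBigO.top_of_nhds_of_cocompact (by fun_prop) (by fun_prop)
    (fun s hs => pow_ne_zero _ hs) ?_ ?_
  · refine hFv.congr' ?_ EventuallyEq.rfl
    filter_upwards [hφ1] with s hs
    simp [hs]
  · refine (isBigO_cocompact_sum_pow_smul v m).neg_left.congr' ?_ EventuallyEq.rfl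
    filter_upwards [hφc.isCompact.compl_mem_cocompact] with s hs
    simp [image_eq_zero_of_notMem_tsupport hs]

theorem smul_ofReal_mul_pow_smul {E : Type*} [AddCommMonoid E] [Module ℂ E] (z : ℂ) (ε σ : ℝ)
    (n : ℕ) (w : E) :
    z • ((ε * σ : ℝ) : ℂ) ^ n • w = ((ε : ℂ) ^ n * ((σ : ℂ) ^ n * z)) • w := by
  rw [smul_smul]
  push_cast
  ring_nf

namespace SchwartzMap

variable {E : Type*} [NormedAddCommGroup E] [NormedSpace ℂ E] (ψ : 𝓢(ℝ, ℂ))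

theorem integrable_ofReal_pow_mul (k : ℕ) : Integrable fun σ : ℝ => (σ : ℂ) ^ k * ψ σ :=
  (ψ.integrable_pow_mul volume k).mono' (by fun_prop) (Eventually.of_forall fun σ => by simp)

theorem integrable_smul_pow_smul (ε : ℝ) (n : ℕ) (w : E) :
    Integrable fun σ : ℝ => ψ σ • ((ε * σ : ℝ) : ℂ) ^ n • w := by
  simp_rw [smul_ofReal_mul_pow_smul]
  exact ((ψ.integrable_ofReal_pow_mul n).const_mul _).smul_const w

variable [CompleteSpace E]

theorem integral_smul_sum_pow_smul (hmass : ∫ σ : ℝ, ψ σ = 1)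
    (hmom : ∀ k : ℕ, 1 ≤ k → ∫ σ : ℝ, (σ : ℂ) ^ k * ψ σ = 0) (v : ℕ → E) (N : ℕ) (ε : ℝ) :
    ∫ σ : ℝ, ψ σ • ∑ n ∈ Finset.range (N + 1), ((ε * σ : ℝ) : ℂ) ^ n • v n = v 0 := by
  simp_rw [Finset.smul_sum]
  rw [integral_finsetSum _ fun n _ => ψ.integrable_smul_pow_smul ε n (v n)]
  simp_rw [smul_ofReal_mul_pow_smul, integral_smul_const, integral_const_mul]
  rw [Finset.sum_range_succ', Finset.sum_eq_zero fun n _ => by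
    rw [hmom (n + 1) n.succ_pos, mul_zero, zero_smul]]
  simp [hmass]

theorem norm_integral_smul_comp_mul_sub_le (hmass : ∫ σ : ℝ, ψ σ = 1)
    (hmom : ∀ k : ℕ, 1 ≤ k → ∫ σ : ℝ, (σ : ℂ) ^ k * ψ σ = 0) {g : ℝ → E} (hg : Continuous g)
    (v : ℕ → E) {N m : ℕ} {K : ℝ}
    (hgv : ∀ s : ℝ, ‖g s - ∑ n ∈ Finset.range (N + 1), (s : ℂ) ^ n • v n‖ ≤ K * |s| ^ m)
    (ε : ℝ) :
    ‖(∫ σ : ℝ, ψ σ • g (ε * σ)) - v 0‖ ≤ K * (∫ σ : ℝ, |σ| ^ m * ‖ψ σ‖) * |ε| ^ m := by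
  set P : ℝ → E := fun s => ∑ n ∈ Finset.range (N + 1), (s : ℂ) ^ n • v n
  have hbound (σ : ℝ) :
      ‖ψ σ • (g (ε * σ) - P (ε * σ))‖ ≤ K * |ε| ^ m * (|σ| ^ m * ‖ψ σ‖) := by
    rw [norm_smul]
    calc ‖ψ σ‖ * ‖g (ε * σ) - P (ε * σ)‖ ≤ ‖ψ σ‖ * (K * |ε * σ| ^ m) := by
          gcongr; exact hgv _
      _ = K * |ε| ^ m * (|σ| ^ m * ‖ψ σ‖) := by rw [abs_mul, mul_pow]; ring
  have hmajor : Integrable fun σ : ℝ => K * |ε| ^ m * (|σ| ^ m * ‖ψ σ‖) := by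
    simpa using (ψ.integrable_pow_mul volume m).const_mul (K * |ε| ^ m)
  have hrem : Integrable fun σ : ℝ => ψ σ • (g (ε * σ) - P (ε * σ)) :=
    hmajor.mono' (by fun_prop) (Eventually.of_forall hbound)
  have hpoly : Integrable fun σ : ℝ => ψ σ • P (ε * σ) := by
    simp only [P, Finset.smul_sum]
    exact integrable_finsetSum _ fun n _ => ψ.integrable_smul_pow_smul ε n (v n)
  have hsplit : ∫ σ : ℝ, ψ σ • g (ε * σ) = (∫ σ : ℝ, ψ σ • (g (ε * σ) - P (ε * σ))) + v 0 := by
    rw [← ψ.integral_smul_sum_pow_smul hmass hmom v N ε, ← integral_add hrem hpoly]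
    simp_rw [← smul_add, sub_add_cancel]
  rw [hsplit, add_sub_cancel_right]
  calc _ ≤ ∫ σ : ℝ, K * |ε| ^ m * (|σ| ^ m * ‖ψ σ‖) :=
        norm_integral_le_of_norm_le hmajor (Eventually.of_forall hbound)
    _ = _ := by rw [integral_const_mul]; ring

end SchwartzMap

section cosCoeff

variable {𝔸 : Type*} [Ring 𝔸] [Algebra ℂ 𝔸]

noncomputable def cosCoeff (a : 𝔸) (n : ℕ) : 𝔸 :=
  (2 : ℂ)⁻¹ • ((n.factorial : ℂ)⁻¹ • (Complex.I • a) ^ n +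
    (n.factorial : ℂ)⁻¹ • (-Complex.I • a) ^ n)

theorem cosCoeff_zero (a : 𝔸) : cosCoeff a 0 = 1 := by
  simp [cosCoeff, ← two_smul ℂ (1 : 𝔸), smul_smul]

end cosCoeff

section opCos

variable {H : Type*} [NormedAddCommGroup H] [InnerProductSpace ℂ H] [CompleteSpace H]

theorem opCos_eq (A : H →L[ℂ] H) (s : ℝ) :
    opCos A s = (2 : ℂ)⁻¹ • (NormedSpace.exp ((s : ℂ) • Complex.I • A) +
      NormedSpace.exp ((s : ℂ) • -Complex.I • A)) := by
  simp only [opCos, smul_smul, neg_mul, mul_neg]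

theorem continuous_opCos (A : H →L[ℂ] H) : Continuous (opCos A) := by
  have hexp : Continuous (NormedSpace.exp : (H →L[ℂ] H) → H →L[ℂ] H) :=
    continuous_iff_continuousAt.2 fun B => (NormedSpace.exp_analytic (𝕂 := ℂ) B).continuousAt
  unfold opCos
  fun_prop

theorem isBigO_opCos_sub_sum (A : H →L[ℂ] H) (m : ℕ) :
    (fun s : ℝ => opCos A s - ∑ n ∈ Finset.range (m + 1), (s : ℂ) ^ n • cosCoeff A n)
      =O[𝓝 0] fun s : ℝ => s ^ m := by
  have h := ((NormedSpace.isBigO_exp_smul_sub_sum (Complex.I • A) (m + 1)).add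
    (NormedSpace.isBigO_exp_smul_sub_sum (-Complex.I • A) (m + 1))).const_smul_left (2 : ℂ)⁻¹
  refine (h.trans (isLittleO_pow_pow (Nat.lt_succ_self m)).isBigO).congr_left fun s => ?_
  simp only [Pi.smul_apply, opCos_eq, cosCoeff, smul_add, Finset.smul_sum,
    Finset.sum_add_distrib, smul_sub, smul_comm ((s : ℂ) ^ _) (2 : ℂ)⁻¹]
  abel

end opCos

theorem regOp_eq_integral_comp_mul {H : Type*} [NormedAddCommGroup H] [InnerProductSpace ℂ H]
    [CompleteSpace H] (A : H →L[ℂ] H) (φ ψ : ℝ → ℂ) {ε : ℝ} (hε : 0 < ε) :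
    regOp A φ ψ ε = ∫ σ : ℝ, ψ σ • (φ (ε * σ) • opCos A (ε * σ)) := by
  have h := Measure.integral_comp_mul_left
    (fun s => (φ s * (ε : ℂ)⁻¹ * ψ (s / ε)) • opCos A s) ε
  rw [abs_inv, abs_of_pos hε] at h
  rw [regOp, ← smul_inv_smul₀ hε.ne' (∫ s : ℝ, _), ← h, ← integral_smul]
  congr 1
  funext σ
  rw [mul_div_cancel_left₀ σ hε.ne', smul_smul, ← smul_assoc, Complex.real_smul]
  have hε' : (ε : ℂ) ≠ 0 := Complex.ofReal_ne_zero.2 hε.ne'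
  field_simp

theorem stmt11_general {H : Type*} [NormedAddCommGroup H] [InnerProductSpace ℂ H] [CompleteSpace H]
    (A : H →L[ℂ] H)
    (ψ : SchwartzMap ℝ ℂ) (hψmass : (∫ σ : ℝ, ψ σ) = 1)
    (hψmom : ∀ k : ℕ, 1 ≤ k → (∫ σ : ℝ, (σ : ℂ) ^ k * ψ σ) = 0)
    (c : ℝ) (hc : 0 < c) (φ : ℝ → ℂ)
    (hφcont : Continuous φ)
    (hφsupp : Function.support φ ⊆ Set.Icc (-(2 * c)) (2 * c))
    (hφ1 : ∀ s ∈ Set.Ioo (-c) c, φ s = 1) :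
    ∀ (u : H) (m : ℕ),
      (fun ε : ℝ => ‖regOp A φ (⇑ψ) ε u - u‖) =O[𝓝[>] (0 : ℝ)] fun ε : ℝ => ε ^ m := by
  intro u m
  have hφc : HasCompactSupport φ := .of_support_subset_isCompact isCompact_Icc hφsupp
  have hφ0 : φ =ᶠ[𝓝 0] 1 := eventuallyEq_of_mem (Ioo_mem_nhds (neg_lt_zero.2 hc) hc) hφ1
  obtain ⟨K, hK⟩ := isBigO_top.1 <| isBigO_top_smul_sub_sum_of_isBigO_nhds hφcont hφc hφ0
    (continuous_opCos A) (cosCoeff A) m (isBigO_opCos_sub_sum A m)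
  refine IsBigO.of_bound (K * (∫ σ : ℝ, |σ| ^ m * ‖ψ σ‖) * ‖u‖) ?_
  filter_upwards [self_mem_nhdsWithin] with ε (hε : 0 < ε)
  have hT := ψ.norm_integral_smul_comp_mul_sub_le hψmass hψmom
    (g := fun s => φ s • opCos A s) (hφcont.smul (continuous_opCos A)) (cosCoeff A)
    (fun s => (hK s).trans_eq (by rw [norm_pow, Real.norm_eq_abs])) ε
  rw [← regOp_eq_integral_comp_mul A φ ψ hε, cosCoeff_zero] at hT
  calc ‖‖regOp A φ ψ ε u - u‖‖ = ‖(regOp A φ ψ ε - 1) u‖ := by simp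
    _ ≤ ‖regOp A φ ψ ε - 1‖ * ‖u‖ := (regOp A φ ψ ε - 1).le_opNorm u
    _ ≤ K * (∫ σ : ℝ, |σ| ^ m * ‖ψ σ‖) * |ε| ^ m * ‖u‖ := by gcongr
    _ = K * (∫ σ : ℝ, |σ| ^ m * ‖ψ σ‖) * ‖u‖ * ‖ε ^ m‖ := by
      rw [norm_pow, Real.norm_eq_abs]
      ring

/-- **negligibility of the error.** If the Schwartz profile `ψ` has unit mass
and all higher moments vanishing, and the bounded continuous cutoff `φ` is supported in
`[-2c, 2c]` and equals `1` on `(-c, c)`, then for every `u ∈ H` and every `m ∈ ℕ`,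
`‖T_ε u - u‖ = O(ε^m)` as `ε → 0⁺`. -/
theorem stmt11 {H : Type*} [NormedAddCommGroup H] [InnerProductSpace ℂ H] [CompleteSpace H]
    (A : H →L[ℂ] H) (hA : IsSelfAdjoint A)
    (ψ : SchwartzMap ℝ ℂ) (hψmass : (∫ σ : ℝ, ψ σ) = 1)
    (hψmom : ∀ k : ℕ, 1 ≤ k → (∫ σ : ℝ, (σ : ℂ) ^ k * ψ σ) = 0)
    (c : ℝ) (hc : 0 < c) (φ : ℝ → ℂ)
    (hφcont : Continuous φ) (hφbdd : BddAbove (Set.range fun s : ℝ => ‖φ s‖))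
    (hφsupp : Function.support φ ⊆ Set.Icc (-(2 * c)) (2 * c))
    (hφ1 : ∀ s ∈ Set.Ioo (-c) c, φ s = 1) :
    ∀ (u : H) (m : ℕ),
      (fun ε : ℝ => ‖regOp A φ (⇑ψ) ε u - u‖) =O[𝓝[>] (0 : ℝ)] fun ε : ℝ => ε ^ m :=
  stmt11_general A ψ hψmass hψmom c hc φ hφcont hφsupp hφ1
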